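/- arXiv:2405.01072 — 5 statements merged into one kernel-verified Lean document; each statement's English description precedes it below -/
import Mathlib

section
/- Let $(N_1,\ldots,N_H)$ follow a multinomial distribution with $n$ trials and equal cell probabilities $1/H$, with $d_n = \#\{r: N_r>0\}$ and $W_r = \mathbb{I}(N_r>0)/d_n$. Then $\mathrm{Var}(W_r) = \frac{1}{H^2}\sum_{l=1}^{H-1} (l/H)^{n-1}$ for each $r$. -/
open MeasureTheory ProbabilityTheory
open scoped ENNReal

/-!
By the symmetry of the strata, `E[W_r] = 1/H` and `E[W_r²] = E[1/d_n]/H`, because `∑_r W_r = 1`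
and `∑_r W_r² = 1/d_n`. For a sample `y` with set of nonempty strata `S`, `1/|S|` is the
proportion of permutations `σ` of the strata for which `σ (y 0)` is the largest element of
`σ(S)`. Exchanging the sums over samples and permutations, `∑_y 1/|S_y|` counts the samples
whose first observation lies in the top nonempty stratum, i.e. `∑_{m=1}^{H} m^(n-1)`.
-/

namespace JPS

open Finset

section Weight

variable {α : Type*} [DecidableEq α] {n : ℕ}

def occupied (y : Fin n → α) : Finset α := univ.image y

-- `weight r y` is the paper's `W_r` for the sample `y`, and `d_n = #(occupied y)`.
noncomputable def weight (r : α) (y : Fin n → α) : ℝ :=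
  if r ∈ occupied y then (#(occupied y) : ℝ)⁻¹ else 0

lemma mem_occupied_iff_card_filter_pos (x : ℕ → α) (r : α) :
    r ∈ occupied (fun i : Fin n => x i) ↔ 0 < #{i ∈ range n | x i = r} := by
  simp [occupied, card_pos, Finset.Nonempty, Fin.exists_iff]

lemma card_occupied_pos (hn : 0 < n) (y : Fin n → α) : 0 < #(occupied y) :=
  card_pos.2 ⟨y ⟨0, hn⟩, mem_image_of_mem y (mem_univ _)⟩

lemma sum_weight_pow_succ [Fintype α] (hn : 0 < n) (y : Fin n → α) (p : ℕ) :
    ∑ r, weight r y ^ (p + 1) = ((#(occupied y) : ℝ)⁻¹) ^ p := by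
  have hS : (#(occupied y) : ℝ) ≠ 0 := by exact_mod_cast (card_occupied_pos hn y).ne'
  simp only [weight, ite_pow, zero_pow p.succ_ne_zero]
  rw [sum_ite_mem, univ_inter, sum_const, nsmul_eq_mul, pow_succ, ← mul_assoc,
    mul_comm _ (_ ^ p), mul_assoc, mul_inv_cancel₀ hS, mul_one]

lemma occupied_perm_comp (σ : Equiv.Perm α) (y : Fin n → α) :
    occupied (σ ∘ y) = (occupied y).map σ.toEmbedding := by
  simp [occupied, map_eq_image, image_image]

lemma weight_perm_comp (σ : Equiv.Perm α) (r : α) (y : Fin n → α) :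
    weight r (σ ∘ y) = weight (σ.symm r) y := by
  simp only [weight, occupied_perm_comp, mem_map_equiv, card_map]

lemma sum_comp_weight_eq [Fintype α] (F : ℝ → ℝ) (r r' : α) :
    ∑ y : Fin n → α, F (weight r y) = ∑ y : Fin n → α, F (weight r' y) := by
  refine Fintype.sum_equiv (Equiv.piCongrRight fun _ => Equiv.swap r' r) _ _ fun y => ?_
  change F (weight r y) = F (weight r' (Equiv.swap r' r ∘ y))
  rw [weight_perm_comp, Equiv.symm_swap, Equiv.swap_apply_left]

lemma card_mul_sum_weight_pow_succ [Fintype α] (hn : 0 < n) (r : α) (p : ℕ) :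
    Fintype.card α * ∑ y : Fin n → α, weight r y ^ (p + 1)
      = ∑ y : Fin n → α, ((#(occupied y) : ℝ)⁻¹) ^ p := by
  calc Fintype.card α * ∑ y : Fin n → α, weight r y ^ (p + 1)
      = ∑ r' : α, ∑ y : Fin n → α, weight r' y ^ (p + 1) := by
        rw [← card_univ, ← nsmul_eq_mul, ← sum_const]
        exact sum_congr rfl fun r' _ => sum_comp_weight_eq (· ^ (p + 1)) r r'
    _ = _ := by
        rw [sum_comm]
        exact sum_congr rfl fun y _ => sum_weight_pow_succ hn y p

end Weight

section Permutations

variable {α : Type*} [Fintype α] [LinearOrder α]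

def permsMaxAt (S : Finset α) (b : α) : Finset (Equiv.Perm α) :=
  {σ | ∀ s ∈ S, σ s ≤ σ b}

lemma mem_permsMaxAt {S : Finset α} {b : α} {σ : Equiv.Perm α} :
    σ ∈ permsMaxAt S b ↔ ∀ s ∈ S, σ s ≤ σ b := by
  simp [permsMaxAt]

lemma card_permsMaxAt_eq {S : Finset α} {b b' : α} (hb : b ∈ S) (hb' : b' ∈ S) :
    #(permsMaxAt S b) = #(permsMaxAt S b') := by
  have hswap : ∀ s ∈ S, Equiv.swap b b' s ∈ S := fun s hs => by
    rw [Equiv.swap_apply_def]; split_ifs <;> assumption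
  refine card_equiv (Equiv.mulRight (Equiv.swap b b')) fun σ => ?_
  simp only [mem_permsMaxAt, Equiv.coe_mulRight, Equiv.Perm.coe_mul, Function.comp_apply,
    Equiv.swap_apply_right]
  constructor
  · exact fun h s hs => h _ (hswap s hs)
  · intro h s hs
    simpa using h _ (hswap s hs)

lemma card_mul_card_permsMaxAt {S : Finset α} {b : α} (hb : b ∈ S) :
    #S * #(permsMaxAt S b) = (Fintype.card α).factorial := by
  have hcover : (univ : Finset (Equiv.Perm α)) = S.biUnion (permsMaxAt S) := by
    ext σ
    obtain ⟨c, hc, hmax⟩ := S.exists_max_image σ ⟨b, hb⟩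
    simpa [mem_permsMaxAt] using ⟨c, hc, hmax⟩
  have hdisj : (S : Set α).PairwiseDisjoint (permsMaxAt S) := by
    intro c hc c' hc' hne
    refine disjoint_left.2 fun σ hσ hσ' => hne (σ.injective ?_)
    rw [mem_permsMaxAt] at hσ hσ'
    exact le_antisymm (hσ' c hc) (hσ c' hc')
  rw [← Fintype.card_perm, ← card_univ, hcover, card_biUnion hdisj,
    sum_congr rfl fun c hc => card_permsMaxAt_eq hc hb, sum_const, smul_eq_mul]

variable [LocallyFiniteOrderBot α]

lemma card_filter_le_apply_zero (k : ℕ) :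
    #{y : Fin (k + 1) → α | ∀ i, y i ≤ y 0} = ∑ m : α, #(Iic m) ^ k := by
  calc #{y : Fin (k + 1) → α | ∀ i, y i ≤ y 0}
      = ∑ m : α, ∑ t : Fin k → α, if ∀ j, t j ≤ m then 1 else 0 := by
        rw [card_filter, ← (Fin.consEquiv fun _ => α).sum_comp, Fintype.sum_prod_type]
        simp [Fin.consEquiv, Fin.forall_fin_succ]
    _ = ∑ m : α, #(Iic m) ^ k := by
        refine sum_congr rfl fun m _ => ?_
        have hpi : ({t : Fin k → α | ∀ j, t j ≤ m} : Finset _)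
            = Fintype.piFinset fun _ => Iic m := by
          ext t; simp
        rw [← card_filter, hpi, Fintype.card_piFinset, prod_const, card_univ, Fintype.card_fin]

lemma sum_inv_card_occupied (k : ℕ) :
    ∑ y : Fin (k + 1) → α, (#(occupied y) : ℝ)⁻¹ = ∑ m : α, (#(Iic m) : ℝ) ^ k := by
  have hfact : ((Fintype.card α).factorial : ℝ) ≠ 0 := by positivity
  have hinv : ∀ y : Fin (k + 1) → α, (#(occupied y) : ℝ)⁻¹
      = #{σ : Equiv.Perm α | ∀ i, σ (y i) ≤ σ (y 0)} / (Fintype.card α).factorial := by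
    intro y
    have hy0 : y 0 ∈ occupied y := mem_image_of_mem y (mem_univ 0)
    have hperm : permsMaxAt (occupied y) (y 0)
        = ({σ : Equiv.Perm α | ∀ i, σ (y i) ≤ σ (y 0)} : Finset _) := by
      ext σ; simp [mem_permsMaxAt, occupied]
    have hpos : (#(occupied y) : ℝ) ≠ 0 := mod_cast (card_occupied_pos k.succ_pos y).ne'
    rw [← hperm, eq_div_iff hfact, ← card_mul_card_permsMaxAt hy0]
    push_cast
    field_simp
  have hcount : ∑ y : Fin (k + 1) → α, #{σ : Equiv.Perm α | ∀ i, σ (y i) ≤ σ (y 0)}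
      = (Fintype.card α).factorial * #{y : Fin (k + 1) → α | ∀ i, y i ≤ y 0} := by
    calc ∑ y : Fin (k + 1) → α, #{σ : Equiv.Perm α | ∀ i, σ (y i) ≤ σ (y 0)}
        = ∑ σ : Equiv.Perm α, #{y : Fin (k + 1) → α | ∀ i, σ (y i) ≤ σ (y 0)} := by
          simp only [card_filter]; exact sum_comm
      _ = ∑ _σ : Equiv.Perm α, #{y : Fin (k + 1) → α | ∀ i, y i ≤ y 0} :=
          sum_congr rfl fun σ _ => card_equiv (Equiv.piCongrRight fun _ => σ) (by simp)
      _ = _ := by simp [Fintype.card_perm]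
  rw [sum_congr rfl fun y _ => hinv y, ← sum_div, div_eq_iff hfact]
  exact_mod_cast (hcount.trans (by rw [card_filter_le_apply_zero]; ring))

end Permutations

lemma sum_sq_weight_sub_one_div {H : ℕ} (hH : 0 < H) (r : Fin H) (k : ℕ) :
    ∑ y : Fin (k + 1) → Fin H, (weight r y - 1 / H) ^ 2
      = (∑ l ∈ range (H - 1), ((l : ℝ) + 1) ^ k) / H := by
  obtain ⟨H, rfl⟩ : ∃ H', H = H' + 1 := ⟨H - 1, by omega⟩
  have hsum := card_mul_sum_weight_pow_succ k.succ_pos r 0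
  have hsum_sq := card_mul_sum_weight_pow_succ k.succ_pos r 1
  simp only [zero_add, pow_one, pow_zero, sum_const, card_univ, Fintype.card_fun,
    Fintype.card_fin, nsmul_eq_mul, mul_one, sum_inv_card_occupied, Fin.card_Iic,
    Nat.succ_eq_add_one] at hsum hsum_sq
  rw [Fin.sum_univ_eq_sum_range (fun l => ((l + 1 : ℕ) : ℝ) ^ k), sum_range_succ] at hsum_sq
  simp only [sub_sq, sum_add_distrib, sum_sub_distrib, ← sum_mul, ← mul_sum, sum_const,
    card_univ, Fintype.card_fun, Fintype.card_fin, nsmul_eq_mul, add_tsub_cancel_right]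
  have hH' : ((H + 1 : ℕ) : ℝ) ≠ 0 := by positivity
  push_cast at hsum hsum_sq hH' ⊢
  field_simp
  linear_combination (↑H + 1 : ℝ) * hsum_sq - 2 * hsum

section Sampling

variable {Ω α : Type*} [MeasureSpace Ω] [MeasurableSpace α] [MeasurableSingletonClass α]
  {X : ℕ → Ω → α} {p : ℝ≥0∞}

lemma measure_sample_eq (hindep : iIndepFun X ℙ) (hunif : ∀ i a, ℙ {ω | X i ω = a} = p)
    {n : ℕ} (y : Fin n → α) : ℙ {ω | (fun i : Fin n => X i ω) = y} = p ^ n := by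
  have hprod := (hindep.precomp Fin.val_injective).measure_inter_preimage_eq_mul univ
    (sets := fun i => {y i}) fun _ _ => measurableSet_singleton _
  have hset : {ω | (fun i : Fin n => X i ω) = y}
      = ⋂ i ∈ (univ : Finset (Fin n)), X i ⁻¹' {y i} := by
    ext ω; simp [funext_iff]
  simp only [Set.preimage, Set.mem_singleton_iff, hunif, prod_const, card_univ,
    Fintype.card_fin] at hprod
  rw [hset, ← hprod]
  rfl

lemma integral_comp_sample [IsFiniteMeasure (ℙ : Measure Ω)] [Fintype α]
    (hX : ∀ i, Measurable (X i)) (hindep : iIndepFun X ℙ)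
    (hunif : ∀ i a, ℙ {ω | X i ω = a} = p) {n : ℕ} (g : (Fin n → α) → ℝ) :
    ∫ ω, g (fun i : Fin n => X i ω) ∂ℙ = p.toReal ^ n * ∑ y, g y := by
  have hY : Measurable fun ω (i : Fin n) => X i ω := measurable_pi_iff.2 fun i => hX i
  rw [← integral_map hY.aemeasurable (measurable_of_finite g).aestronglyMeasurable,
    integral_fintype .of_finite, mul_sum]
  refine sum_congr rfl fun y _ => ?_
  rw [smul_eq_mul, Measure.real, Measure.map_apply hY (measurableSet_singleton y)]
  simp [Set.preimage, measure_sample_eq hindep hunif, ENNReal.toReal_pow]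

end Sampling

end JPS

/-- Closed form for the variance of the JPS stratum weight `W r`:
`Var (W r) = (1/H^2) * ∑_{l=1}^{H-1} (l/H)^(n-1)`. -/
theorem stmt_3 {Ω : Type*} [MeasureSpace Ω] [IsProbabilityMeasure (ℙ : Measure Ω)]
    (H n : ℕ) (hH : 0 < H) (hn : 1 ≤ n)
    (X : ℕ → Ω → Fin H) (hXmeas : ∀ i, Measurable (X i))
    (hindep : iIndepFun X ℙ)
    (hunif : ∀ i r, ℙ {ω | X i ω = r} = (H : ℝ≥0∞)⁻¹)
    (N : Fin H → Ω → ℕ)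
    (hN : ∀ r ω, N r ω = ((Finset.range n).filter (fun i => X i ω = r)).card)
    (d : Ω → ℕ)
    (hd : ∀ ω, d ω = (Finset.univ.filter (fun r : Fin H => 0 < N r ω)).card)
    (W : Fin H → Ω → ℝ)
    (hW : ∀ r ω, W r ω = if 0 < N r ω then (d ω : ℝ)⁻¹ else 0)
    (r : Fin H) :
    ∫ ω, (W r ω - 1 / H) ^ 2 ∂ℙ
      = (1 / (H : ℝ) ^ 2) * ∑ l ∈ Finset.range (H - 1), (((l : ℝ) + 1) / H) ^ (n - 1) := by
  obtain ⟨k, rfl⟩ : ∃ k, n = k + 1 := ⟨n - 1, by omega⟩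
  have hWeight : ∀ ω, W r ω = JPS.weight r (fun i : Fin (k + 1) => X i ω) := by
    intro ω
    have hocc : ∀ r', 0 < N r' ω ↔ r' ∈ JPS.occupied (fun i : Fin (k + 1) => X i ω) :=
      fun r' => hN r' ω ▸ (JPS.mem_occupied_iff_card_filter_pos (X · ω) r').symm
    simp only [hW, hd, hocc, JPS.weight, Finset.filter_mem_eq_inter, Finset.univ_inter]
  simp only [hWeight]
  rw [JPS.integral_comp_sample hXmeas hindep hunif (fun y => (JPS.weight r y - 1 / H) ^ 2),
    JPS.sum_sq_weight_sub_one_div hH, Nat.add_sub_cancel]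
  simp only [ENNReal.toReal_inv, ENNReal.toReal_natCast, inv_pow, div_pow, ← Finset.sum_div]
  have hH' : (H : ℝ) ≠ 0 := by positivity
  field_simp
  ring
end

section
/- Let $\{K_n\}$ be a sequence of CDFs converging weakly to $e(t) = \mathbb{I}(t \geq 0)$, and let $X$ be a random variable with CDF $G$ continuous at $t$. Then $\mathbb{E}[K_n(t - X)] \to G(t)$ as $n \to \infty$. -/
/-!
Since `0 ≤ K n ≤ 1`, dominated convergence applies to `x ↦ K n (t - x)` as soon as it converges
`μ`-a.e. It converges to the indicator of `Iic t` at every `x ≠ t`, and continuity of the CDF at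
`t` means exactly that `μ` has no atom at `t`. The limit is then `μ (Iic t) = G t`.
-/

open MeasureTheory Filter Set ProbabilityTheory

theorem StieltjesFunction.measure_singleton_eq_zero_of_continuousWithinAt
    (f : StieltjesFunction ℝ) {a : ℝ} (hf : ContinuousWithinAt f (Iic a) a) :
    f.measure {a} = 0 := by
  rw [f.measure_singleton, hf.leftLim_eq, sub_self, ENNReal.ofReal_zero]

theorem measure_singleton_eq_zero_of_continuousAt_cdf (μ : Measure ℝ) [IsProbabilityMeasure μ]
    {a : ℝ} (h : ContinuousAt (cdf μ) a) : μ {a} = 0 := by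
  simpa only [measure_cdf] using
    (cdf μ).measure_singleton_eq_zero_of_continuousWithinAt h.continuousWithinAt

theorem tendsto_integral_comp_sub_of_tendsto_step {K : ℕ → ℝ → ℝ}
    (hmeas : ∀ n, Measurable (K n)) (hbound : ∀ n s, ‖K n s‖ ≤ 1)
    (hstep : ∀ s : ℝ, s ≠ 0 →
      Tendsto (fun n => K n s) atTop (nhds (if 0 ≤ s then (1 : ℝ) else 0)))
    (μ : Measure ℝ) [IsFiniteMeasure μ] {t : ℝ} (ht : μ {t} = 0) :
    Tendsto (fun n => ∫ x, K n (t - x) ∂μ) atTop (nhds (μ.real (Iic t))) := by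
  rw [← integral_indicator_one measurableSet_Iic]
  refine tendsto_integral_of_dominated_convergence (fun _ => 1)
    (fun n => ((hmeas n).comp (measurable_const.sub measurable_id)).aestronglyMeasurable)
    (integrable_const 1) (fun n => ae_of_all _ fun x => hbound n _) ?_
  have hne : ∀ᵐ x ∂μ, x ≠ t := measure_eq_zero_iff_ae_notMem.mp ht
  filter_upwards [hne] with x hx
  convert hstep (t - x) (sub_ne_zero.mpr hx.symm) using 2
  by_cases hxt : x ≤ t <;> simp [hxt]

/-- If the CDFs `K n` converge weakly to the unit step `e(t) = 𝕀(t ≥ 0)` and `G` is the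
CDF of `μ`, continuous at `t`, then `E[K n (t - X)] → G t`. -/
theorem stmt_7 (K : ℕ → ℝ → ℝ)
    (hmono : ∀ n, Monotone (K n))
    (hbot : ∀ n, Tendsto (K n) atBot (nhds 0))
    (htop : ∀ n, Tendsto (K n) atTop (nhds 1))
    (hweak : ∀ s : ℝ, s ≠ 0 →
      Tendsto (fun n => K n s) atTop (nhds (if 0 ≤ s then (1 : ℝ) else 0)))
    (μ : Measure ℝ) [IsProbabilityMeasure μ]
    (G : ℝ → ℝ) (hG : ∀ s, G s = (μ (Set.Iic s)).toReal)
    (t : ℝ) (hcont : ContinuousAt G t) :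
    Tendsto (fun n => ∫ x, K n (t - x) ∂μ) atTop (nhds (G t)) := by
  have hG_cdf : G = cdf μ := funext fun s => by rw [hG, cdf_eq_real, measureReal_def]
  have hbound : ∀ n s, ‖K n s‖ ≤ 1 := fun n s => by
    rw [Real.norm_of_nonneg ((hmono n).le_of_tendsto (hbot n) s)]
    exact (hmono n).ge_of_tendsto (htop n) s
  have hatom : μ {t} = 0 := measure_singleton_eq_zero_of_continuousAt_cdf μ (hG_cdf ▸ hcont)
  rw [hG_cdf, cdf_eq_real]
  exact tendsto_integral_comp_sub_of_tendsto_step (fun n => (hmono n).measurable) hbound hweak μ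
    hatom
end

section
/- Let $F$ be a CDF that is three times continuously differentiable with density $f = F'$, let $k$ be a symmetric probability density on $[-a,a]$ with CDF $K$, and let $h > 0$. Then $\int_{-\infty}^{\infty} K\left(\frac{t-x}{h}\right) f(x)\,dx = F(t) + \frac{h^2}{2} f'(t) \int_{-a}^{a} u^2 k(u)\, du + O(h^3)$ as $h \to 0$. -/
/-!
Fubini turns the smoothed distribution function into `∫ k(u) F(t - h u) du`. Expanding
`F(t - h u)` to second order around `t`, the zeroth and first moments of `k` leave
`F(t) + (h²/2) F''(t) ∫ u² k`, and the Lagrange remainder is at most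
`sup |F'''| · a³ h³ / 6`, with the supremum taken over `[t - a, t + a]`.
-/

open MeasureTheory Set
open scoped Nat

theorem abs_sub_taylor_le {F : ℝ → ℝ} {n : ℕ} (hF : ContDiff ℝ (n + 1) F) {x₀ x M : ℝ}
    (hM : ∀ y ∈ uIcc x₀ x, |iteratedDeriv (n + 1) F y| ≤ M) :
    |F x - ∑ i ∈ Finset.range (n + 1), iteratedDeriv i F x₀ / i ! * (x - x₀) ^ i|
      ≤ M * |x - x₀| ^ (n + 1) / (n + 1)! := by
  rcases eq_or_ne x₀ x with rfl | hne
  · simp [Finset.sum_range_succ']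
  obtain ⟨ξ, hξ, hrem⟩ := taylor_mean_remainder_lagrange_iteratedDeriv hne hF.contDiffOn
  have htaylor : taylorWithinEval F n (uIcc x₀ x) x₀ x
      = ∑ i ∈ Finset.range (n + 1), iteratedDeriv i F x₀ / i ! * (x - x₀) ^ i := by
    rw [taylor_within_apply]
    refine Finset.sum_congr rfl fun i hi => ?_
    rw [iteratedDerivWithin_eq_iteratedDeriv (uniqueDiffOn_uIcc hne)
      (hF.contDiffAt.of_le (by exact_mod_cast (Finset.mem_range.mp hi).le)) left_mem_uIcc,
      smul_eq_mul]
    ring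
  rw [← htaylor, hrem, abs_div, abs_mul, abs_pow, Nat.abs_cast]
  gcongr
  exact hM ξ (uIoo_subset_uIcc_self hξ)

theorem abs_sub_taylor_two_le {F : ℝ → ℝ} (hF : ContDiff ℝ 3 F) {x₀ s M : ℝ}
    (hM : ∀ y ∈ uIcc x₀ (x₀ + s), |iteratedDeriv 3 F y| ≤ M) :
    |F (x₀ + s) - (F x₀ + deriv F x₀ * s + deriv (deriv F) x₀ / 2 * s ^ 2)|
      ≤ M / 6 * |s| ^ 3 := by
  have := abs_sub_taylor_le (n := 2) hF hM
  simp only [Finset.sum_range_succ, Finset.sum_range_zero, iteratedDeriv_succ,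
    iteratedDeriv_zero, add_sub_cancel_left] at this
  norm_num [Nat.factorial] at this
  convert this using 2; ring

theorem integral_Iic_deriv_eq {F : ℝ → ℝ} (hF : Differentiable ℝ F)
    (hF' : Integrable (deriv F)) (hbot : Filter.Tendsto F Filter.atBot (nhds 0)) (s : ℝ) :
    ∫ x in Iic s, deriv F x = F s := by
  rw [integral_Iic_of_hasDerivAt_of_tendsto hF.continuous.continuousWithinAt
    (fun x _ => (hF x).hasDerivAt) hF'.integrableOn hbot, sub_zero]

theorem intervalIntegral_eq_setIntegral_Iic {g : ℝ → ℝ} (hg : Integrable g) {a : ℝ}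
    (h0 : ∀ x < a, g x = 0) (s : ℝ) : ∫ x in a..s, g x = ∫ x in Iic s, g x := by
  have hIic : ∫ x in Iic a, g x = 0 := by
    rw [integral_Iic_eq_integral_Iio]
    exact setIntegral_eq_zero_of_forall_eq_zero fun x hx => h0 x hx
  rw [← intervalIntegral.integral_Iic_sub_Iic hg.integrableOn hg.integrableOn, hIic,
    sub_zero]

theorem abs_intervalIntegral_mul_sub_le {k g₁ g₂ : ℝ → ℝ} {a b B : ℝ} (hab : a ≤ b)
    (hk0 : ∀ u, 0 ≤ k u) (hk : IntervalIntegrable k volume a b)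
    (hg₁ : ContinuousOn g₁ (uIcc a b)) (hg₂ : ContinuousOn g₂ (uIcc a b))
    (hB : ∀ u ∈ Icc a b, |g₁ u - g₂ u| ≤ B) :
    |(∫ u in a..b, k u * g₁ u) - ∫ u in a..b, k u * g₂ u| ≤ B * ∫ u in a..b, k u := by
  have hB0 : 0 ≤ B := (abs_nonneg _).trans (hB a ⟨le_rfl, hab⟩)
  have hbound : ∀ᵐ u ∂volume.restrict (uIoc a b), ‖k u * (g₁ u - g₂ u)‖ ≤ k u * B := by
    refine (ae_restrict_mem measurableSet_uIoc).mono fun u hu => ?_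
    rw [uIoc_of_le hab] at hu
    rw [Real.norm_eq_abs, abs_mul, abs_of_nonneg (hk0 u)]
    exact mul_le_mul_of_nonneg_left (hB u (Ioc_subset_Icc_self hu)) (hk0 u)
  rw [← intervalIntegral.integral_sub (hk.mul_continuousOn hg₁) (hk.mul_continuousOn hg₂)]
  simp only [← mul_sub]
  calc |∫ u in a..b, k u * (g₁ u - g₂ u)| ≤ |∫ u in a..b, k u * B| := by
        simpa only [Real.norm_eq_abs] using
          intervalIntegral.norm_integral_le_abs_of_norm_le hbound (hk.mul_const B)
    _ = B * ∫ u in a..b, k u := by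
        rw [intervalIntegral.integral_mul_const, mul_comm, abs_of_nonneg]
        exact mul_nonneg hB0 (intervalIntegral.integral_nonneg hab fun u _ => hk0 u)

theorem intervalIntegral_mul_quadratic {k : ℝ → ℝ} {a b : ℝ} (hk : IntervalIntegrable k volume a b)
    (c₀ c₁ c₂ : ℝ) :
    ∫ u in a..b, k u * (c₀ + c₁ * u + c₂ * u ^ 2)
      = c₀ * (∫ u in a..b, k u) + c₁ * (∫ u in a..b, u * k u) + c₂ * ∫ u in a..b, u ^ 2 * k u := by
  have h₀ : IntervalIntegrable (fun u => c₀ * k u) volume a b := hk.const_mul c₀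
  have h₁ : IntervalIntegrable (fun u => c₁ * (u * k u)) volume a b :=
    (hk.continuousOn_mul continuousOn_id).const_mul c₁
  have h₂ : IntervalIntegrable (fun u => c₂ * (u ^ 2 * k u)) volume a b :=
    (hk.continuousOn_mul (continuous_pow 2).continuousOn).const_mul c₂
  have hexpand : ∀ u, k u * (c₀ + c₁ * u + c₂ * u ^ 2)
      = c₀ * k u + c₁ * (u * k u) + c₂ * (u ^ 2 * k u) := fun u => by ring
  simp only [hexpand]
  rw [intervalIntegral.integral_add (h₀.add h₁) h₂, intervalIntegral.integral_add h₀ h₁,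
    intervalIntegral.integral_const_mul, intervalIntegral.integral_const_mul,
    intervalIntegral.integral_const_mul]

theorem integral_setIntegral_Iic_div_mul_eq {k f : ℝ → ℝ} (hk : Integrable k) (hf : Integrable f)
    {h : ℝ} (hh : 0 < h) (t : ℝ) :
    ∫ x, (∫ u in Iic ((t - x) / h), k u) * f x = ∫ u, k u * ∫ x in Iic (t - h * u), f x := by
  set G : ℝ → ℝ → ℝ := fun x u => (Iic (t - h * u)).indicator f x * k u
  have hG : Function.uncurry G
      = {p : ℝ × ℝ | p.1 ≤ t - h * p.2}.indicator fun p => f p.1 * k p.2 := by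
    ext p
    simp only [G, Function.uncurry, indicator_apply, mem_Iic, mem_ofPred_eq]
    split_ifs <;> simp
  have hGint : Integrable (Function.uncurry G) (volume.prod volume) := by
    rw [hG]
    exact (hf.mul_prod hk).indicator
      (measurableSet_le measurable_fst (measurable_const.sub (measurable_snd.const_mul h)))
  have hleft : ∀ x, (∫ u in Iic ((t - x) / h), k u) * f x = ∫ u, G x u := by
    intro x
    rw [← integral_indicator measurableSet_Iic, ← integral_mul_const]
    refine integral_congr_ae (Filter.Eventually.of_forall fun u => ?_)
    have hiff : u ≤ (t - x) / h ↔ x ≤ t - h * u := by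
      rw [le_div_iff₀ hh]; constructor <;> intro <;> linarith
    simp only [G, indicator_apply, mem_Iic, hiff]
    split_ifs <;> simp [mul_comm]
  have hright : ∀ u, k u * ∫ x in Iic (t - h * u), f x = ∫ x, G x u := by
    intro u
    rw [← integral_indicator measurableSet_Iic, ← integral_const_mul]
    simp only [G, mul_comm]
  simp only [hleft, hright]
  exact integral_integral_swap hGint

theorem integral_intervalIntegral_div_mul_eq {k K f F : ℝ → ℝ} {a b : ℝ} (hab : a ≤ b)
    (hsupp : ∀ x ∉ Icc a b, k x = 0) (hk : Integrable k) (hK : ∀ s, K s = ∫ x in a..s, k x)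
    (hf : Integrable f) (hF : ∀ s, ∫ x in Iic s, f x = F s) {h : ℝ} (hh : 0 < h) (t : ℝ) :
    ∫ x, K ((t - x) / h) * f x = ∫ u in a..b, k u * F (t - h * u) := by
  have hKIic (s : ℝ) : K s = ∫ u in Iic s, k u :=
    (hK s).trans <| intervalIntegral_eq_setIntegral_Iic hk
      (fun x hx => hsupp x fun hmem => by linarith [hmem.1]) s
  simp only [hKIic, integral_setIntegral_Iic_div_mul_eq hk hf hh, hF]
  rw [intervalIntegral.integral_of_le hab, ← integral_Icc_eq_integral_Ioc,
    setIntegral_eq_integral_of_forall_compl_eq_zero fun u hu => by rw [hsupp u hu, zero_mul]]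

theorem abs_comp_sub_mul_sub_taylor_two_le {F : ℝ → ℝ} (hF : ContDiff ℝ 3 F) {t a h M u : ℝ}
    (hM : ∀ y ∈ Icc (t - a) (t + a), |iteratedDeriv 3 F y| ≤ M)
    (hh : 0 ≤ h) (hh1 : h ≤ 1) (hu : u ∈ Icc (-a) a) :
    |F (t - h * u) - (F t - h * deriv F t * u + h ^ 2 / 2 * deriv (deriv F) t * u ^ 2)|
      ≤ M / 6 * a ^ 3 * h ^ 3 := by
  have hhu : |-(h * u)| ≤ a * h := by
    rw [abs_neg, abs_mul, abs_of_nonneg hh, mul_comm]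
    gcongr
    exact abs_le.mpr hu
  have ha : 0 ≤ a := by linarith [hu.1, hu.2]
  have hah : a * h ≤ a := mul_le_of_le_one_right ha hh1
  have hsub : uIcc t (t + -(h * u)) ⊆ Icc (t - a) (t + a) :=
    uIcc_subset_Icc ⟨by linarith, by linarith⟩
      ⟨by linarith [neg_abs_le (-(h * u))], by linarith [le_abs_self (-(h * u))]⟩
  have hpoly : F t - h * deriv F t * u + h ^ 2 / 2 * deriv (deriv F) t * u ^ 2
      = F t + deriv F t * -(h * u) + deriv (deriv F) t / 2 * (-(h * u)) ^ 2 := by ring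
  rw [sub_eq_add_neg t, hpoly]
  calc _ ≤ M / 6 * |-(h * u)| ^ 3 := abs_sub_taylor_two_le hF fun y hy => hM y (hsub hy)
    _ ≤ M / 6 * (a * h) ^ 3 := by
        have : 0 ≤ M := (abs_nonneg _).trans (hM t ⟨by linarith, by linarith⟩)
        gcongr
    _ = M / 6 * a ^ 3 * h ^ 3 := by ring

theorem stmt_13_general (a : ℝ) (ha : 0 < a) (k : ℝ → ℝ)
    (hk0 : ∀ x, 0 ≤ k x)
    (hsupp : ∀ x, x ∉ Set.Icc (-a) a → k x = 0)
    (hkInt : Integrable k volume)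
    (hint1 : ∫ x in (-a)..a, k x = 1)
    (hint0 : (∫ x in (-a)..a, x * k x) = 0)
    (K : ℝ → ℝ) (hK : ∀ s, K s = ∫ x in (-a)..s, k x)
    (F f : ℝ → ℝ)
    (hF : ContDiff ℝ 3 F) (hf : f = deriv F)
    (hFbot : Filter.Tendsto F Filter.atBot (nhds 0))
    (hfint : Integrable f volume)
    (t : ℝ) :
    ∃ C > (0 : ℝ), ∃ δ > (0 : ℝ), ∀ h : ℝ, 0 < h → h < δ →
      |(∫ x, K ((t - x) / h) * f x)
        - (F t + h ^ 2 / 2 * deriv f t * ∫ u in (-a)..a, u ^ 2 * k u)|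
      ≤ C * h ^ 3 := by
  have hFIic (s : ℝ) : ∫ x in Iic s, f x = F s :=
    hf ▸ integral_Iic_deriv_eq (hF.differentiable (by norm_num)) (hf ▸ hfint) hFbot s
  obtain ⟨M, hM⟩ := (isCompact_Icc (a := t - a) (b := t + a)).exists_bound_of_continuousOn
    (hF.continuous_iteratedDeriv 3 le_rfl).continuousOn
  have hM0 : 0 ≤ M := (norm_nonneg _).trans (hM t ⟨by linarith, by linarith⟩)
  refine ⟨M / 6 * a ^ 3 + 1, by positivity, 1, one_pos, fun h hh hh1 => ?_⟩
  have hmoments : F t + h ^ 2 / 2 * deriv f t * ∫ u in (-a)..a, u ^ 2 * k u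
      = ∫ u in (-a)..a, k u *
          (F t - h * deriv F t * u + h ^ 2 / 2 * deriv (deriv F) t * u ^ 2) := by
    simp only [sub_eq_add_neg, ← neg_mul]
    rw [intervalIntegral_mul_quadratic hkInt.intervalIntegrable, hint1, hint0, hf]
    ring
  have hFc : Continuous F := hF.continuous
  rw [integral_intervalIntegral_div_mul_eq (by linarith) hsupp hkInt hK hfint hFIic hh, hmoments]
  calc _ ≤ M / 6 * a ^ 3 * h ^ 3 * ∫ u in (-a)..a, k u :=
        abs_intervalIntegral_mul_sub_le (by linarith) hk0 hkInt.intervalIntegrable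
          (by fun_prop) (by fun_prop)
          fun u hu => abs_comp_sub_mul_sub_taylor_two_le hF hM hh.le hh1.le hu
    _ ≤ (M / 6 * a ^ 3 + 1) * h ^ 3 := by rw [hint1]; nlinarith [pow_pos hh 3]

/-- Bias expansion of the kernel distribution function estimator:
`∫ K((t-x)/h) f(x) dx = F(t) + (h²/2) f'(t) ∫ u² k(u) du + O(h³)` as `h → 0`. -/
theorem stmt_13 (a : ℝ) (ha : 0 < a) (k : ℝ → ℝ)
    (hk0 : ∀ x, 0 ≤ k x)
    (hsupp : ∀ x, x ∉ Set.Icc (-a) a → k x = 0)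
    (hsymm : ∀ x, k (-x) = k x)
    (hkInt : Integrable k volume)
    (hint1 : ∫ x in (-a)..a, k x = 1)
    (hint0 : (∫ x in (-a)..a, x * k x) = 0)
    (hint2 : (∫ x in (-a)..a, x ^ 2 * k x) ≠ 0)
    (K : ℝ → ℝ) (hK : ∀ s, K s = ∫ x in (-a)..s, k x)
    (F f : ℝ → ℝ)
    (hF : ContDiff ℝ 3 F) (hf : f = deriv F)
    (hFmono : Monotone F)
    (hFbot : Filter.Tendsto F Filter.atBot (nhds 0))
    (hFtop : Filter.Tendsto F Filter.atTop (nhds 1))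
    (hfint : Integrable f volume)
    (t : ℝ) :
    ∃ C > (0 : ℝ), ∃ δ > (0 : ℝ), ∀ h : ℝ, 0 < h → h < δ →
      |(∫ x, K ((t - x) / h) * f x)
        - (F t + h ^ 2 / 2 * deriv f t * ∫ u in (-a)..a, u ^ 2 * k u)|
      ≤ C * h ^ 3 :=
  stmt_13_general a ha k hk0 hsupp hkInt hint1 hint0 K hK F f hF hf hFbot hfint t
end

section
/- Let $F$ be a twice continuously differentiable CDF with density $f$, $k$ a symmetric probability density on $[-a,a]$ with CDF $K$, and $h > 0$. Then $\int_{-\infty}^{\infty} K\left(\frac{t-x}{h}\right)^2 f(x)\, dx = F(t) - h f(t)\left(\frac{a}{2} - \int_{-a}^{a} g(u)^2\, du\right) + O(h^2)$ as $h \to 0$, where $g(u) = K(u) - 1/2$. -/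
/-!
Because `K` vanishes below `-a` and equals `1` above `a`, the integrand equals `f` for
`x ≤ t - a h` and vanishes for `x > t + a h`, while the substitution `x = t - h u` turns the
remaining piece into `h ∫_{-a}^{a} K(u)² f(t - h u) du`. Expanding `F` and `f` to first order at
`t` (with `f` Lipschitz near `t`) leaves `F t - a h f t + h f t ∫ K²` up to `O(h²)`, and
`K² = 1/4 + g + g²` with `g` odd gives `∫ K² = a/2 + ∫ g²`.
-/

open MeasureTheory Set

theorem intervalIntegral_eq_zero_of_forall_Ioo {k : ℝ → ℝ} {p q : ℝ} (hpq : p ≤ q)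
    (h : ∀ x ∈ Ioo p q, k x = 0) : ∫ x in p..q, k x = 0 := by
  rw [intervalIntegral.integral_of_le hpq, integral_Ioc_eq_integral_Ioo,
    setIntegral_congr_fun measurableSet_Ioo h, integral_zero]

section Primitive

variable {a : ℝ} {k : ℝ → ℝ}

theorem primitive_eq_zero_of_le_neg (hsupp : ∀ x, x ∉ Icc (-a) a → k x = 0) {s : ℝ}
    (hs : s ≤ -a) : ∫ x in (-a)..s, k x = 0 := by
  rw [intervalIntegral.integral_symm, neg_eq_zero]
  exact intervalIntegral_eq_zero_of_forall_Ioo hs fun x hx ↦ hsupp x fun hx' ↦ hx.2.not_ge hx'.1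

theorem primitive_eq_one_of_le (hk : Integrable k) (hsupp : ∀ x, x ∉ Icc (-a) a → k x = 0)
    (hk1 : ∫ x in (-a)..a, k x = 1) {s : ℝ} (hs : a ≤ s) : ∫ x in (-a)..s, k x = 1 := by
  rw [← intervalIntegral.integral_add_adjacent_intervals hk.intervalIntegrable
    hk.intervalIntegrable, hk1,
    intervalIntegral_eq_zero_of_forall_Ioo hs fun x hx ↦ hsupp x fun hx' ↦ hx.1.not_ge hx'.2,
    add_zero]

theorem primitive_mem_Icc (hk : Integrable k) (hk0 : ∀ x, 0 ≤ k x)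
    (hsupp : ∀ x, x ∉ Icc (-a) a → k x = 0) (hk1 : ∫ x in (-a)..a, k x = 1) (s : ℝ) :
    ∫ x in (-a)..s, k x ∈ Icc 0 1 := by
  rcases le_total s (-a) with hs | hs
  · simp [primitive_eq_zero_of_le_neg hsupp hs]
  rcases le_total a s with has | has
  · simp [primitive_eq_one_of_le hk hsupp hk1 has]
  · exact ⟨intervalIntegral.integral_nonneg hs fun x _ ↦ hk0 x,
      hk1 ▸ intervalIntegral.integral_mono_interval le_rfl hs has (ae_of_all _ hk0)
        hk.intervalIntegrable⟩

theorem primitive_neg (hk : Integrable k) (hsymm : ∀ x, k (-x) = k x)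
    (hk1 : ∫ x in (-a)..a, k x = 1) (u : ℝ) :
    ∫ x in (-a)..(-u), k x = 1 - ∫ x in (-a)..u, k x := by
  have hflip := intervalIntegral.integral_comp_neg (a := u) (b := a) k
  simp only [hsymm] at hflip
  have hsplit := intervalIntegral.integral_add_adjacent_intervals (a := -a) (b := u) (c := a)
    hk.intervalIntegrable hk.intervalIntegrable
  linarith

end Primitive

theorem integral_add_half_sq_of_odd {g : ℝ → ℝ} (hg : Continuous g) (hodd : ∀ u, g (-u) = -g u)
    (a : ℝ) : ∫ u in (-a)..a, (g u + 1 / 2) ^ 2 = a / 2 + ∫ u in (-a)..a, g u ^ 2 := by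
  have hzero : ∫ u in (-a)..a, g u = 0 := by
    have hflip := intervalIntegral.integral_comp_neg (a := -a) (b := a) g
    simp only [hodd, intervalIntegral.integral_neg, neg_neg] at hflip
    linarith
  have hsplit : ∀ u, (g u + 1 / 2) ^ 2 = (g u ^ 2 + g u) + 1 / 4 := fun u ↦ by ring
  simp only [hsplit]
  rw [intervalIntegral.integral_add ((by fun_prop : Continuous _).intervalIntegrable _ _)
      intervalIntegrable_const,
    intervalIntegral.integral_add ((by fun_prop : Continuous _).intervalIntegrable _ _)
      (hg.intervalIntegrable _ _), hzero,
    intervalIntegral.integral_const, smul_eq_mul]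
  ring

section Smoothing

variable {φ f : ℝ → ℝ} {a h t : ℝ}

theorem integral_comp_sub_div_mul_eq_integral_Iic_add (hh : 0 < h) (hφ : Continuous φ)
    (hφ_abs : ∀ u, |φ u| ≤ 1) (hφ0 : ∀ u ≤ -a, φ u = 0) (hφ1 : ∀ u, a ≤ u → φ u = 1)
    (hf : Integrable f) :
    ∫ x, φ ((t - x) / h) * f x
      = (∫ x in Iic (t - a * h), f x) + h * ∫ u in (-a)..a, φ u * f (t - h * u) := by
  have hint : Integrable fun x ↦ φ ((t - x) / h) * f x :=
    hf.bdd_mul (by fun_prop) (ae_of_all _ fun x ↦ by simpa using hφ_abs _)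
  have hright : ∫ x in Ioi (t + a * h), φ ((t - x) / h) * f x = 0 := by
    refine setIntegral_eq_zero_of_forall_eq_zero fun x hx ↦ ?_
    rw [hφ0 _ (by rw [div_le_iff₀ hh]; linarith [mem_Ioi.mp hx]), zero_mul]
  have hleft : ∫ x in Iic (t - a * h), φ ((t - x) / h) * f x = ∫ x in Iic (t - a * h), f x := by
    refine setIntegral_congr_fun measurableSet_Iic fun x hx ↦ ?_
    rw [hφ1 _ (by rw [le_div_iff₀ hh]; linarith [mem_Iic.mp hx]), one_mul]
  have hmiddle : ∫ x in (t - a * h)..(t + a * h), φ ((t - x) / h) * f x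
      = h * ∫ u in (-a)..a, φ u * f (t - h * u) := by
    have hsub : ∀ x, φ ((t - x) / h) * f x = (fun u ↦ φ u * f (t - h * u)) (t / h - x / h) :=
      fun x ↦ by simp only [← sub_div, mul_div_cancel₀ _ hh.ne', sub_sub_cancel]
    simp only [hsub]
    rw [intervalIntegral.integral_comp_sub_div (fun u ↦ φ u * f (t - h * u)) hh.ne', smul_eq_mul]
    congr 2 <;> field_simp <;> ring
  have htotal := intervalIntegral.integral_Iic_add_Ioi (b := t + a * h) hint.integrableOn
    hint.integrableOn
  have hsplit := intervalIntegral.integral_Iic_sub_Iic (a := t - a * h) (b := t + a * h)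
    hint.integrableOn hint.integrableOn
  linarith

theorem LipschitzOnWith.abs_sub_le_of_abs_sub_le {L : NNReal} {s x : ℝ}
    (hL : LipschitzOnWith L f (Icc (t - s) (t + s))) (hx : |x - t| ≤ s) :
    |f x - f t| ≤ L * s := by
  have hs : 0 ≤ s := (abs_nonneg _).trans hx
  obtain ⟨hx₁, hx₂⟩ := abs_le.mp hx
  calc |f x - f t| ≤ L * |x - t| := by
        simpa only [Real.dist_eq] using
          hL.dist_le_mul x ⟨by linarith, by linarith⟩ t ⟨by linarith, by linarith⟩
    _ ≤ L * s := by gcongr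

theorem abs_integral_sub_mul_le {L : NNReal} {s : ℝ} (hs : 0 ≤ s) (hf : Continuous f)
    (hL : LipschitzOnWith L f (Icc (t - s) (t + s))) :
    |(∫ x in (t - s)..t, f x) - s * f t| ≤ L * s ^ 2 := by
  have hsub : (∫ x in (t - s)..t, f x) - s * f t = ∫ x in (t - s)..t, (f x - f t) := by
    rw [intervalIntegral.integral_sub (hf.intervalIntegrable _ _) intervalIntegrable_const,
      intervalIntegral.integral_const, smul_eq_mul, sub_sub_cancel]
  have hbound : ∀ x ∈ uIoc (t - s) t, ‖f x - f t‖ ≤ L * s := by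
    intro x hx
    rw [uIoc_of_le (by linarith)] at hx
    exact hL.abs_sub_le_of_abs_sub_le (abs_le.mpr ⟨by linarith [hx.1], by linarith [hx.2]⟩)
  calc |(∫ x in (t - s)..t, f x) - s * f t| ≤ L * s * |t - (t - s)| := by
        rw [hsub]; exact intervalIntegral.norm_integral_le_of_norm_le_const hbound
    _ = L * s ^ 2 := by rw [sub_sub_cancel, abs_of_nonneg hs]; ring

theorem abs_integral_mul_sub_le {L : NNReal} (ha : 0 ≤ a) (hh : 0 ≤ h) (hφ_abs : ∀ u, |φ u| ≤ 1)
    (hL : LipschitzOnWith L f (Icc (t - a * h) (t + a * h))) :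
    |∫ u in (-a)..a, φ u * (f (t - h * u) - f t)| ≤ 2 * L * a ^ 2 * h := by
  have hbound : ∀ u ∈ uIoc (-a) a, ‖φ u * (f (t - h * u) - f t)‖ ≤ L * (a * h) := by
    intro u hu
    rw [uIoc_of_le (by linarith)] at hu
    have hhu : |t - h * u - t| ≤ a * h := by
      rw [sub_sub_cancel_left, abs_neg, abs_mul, abs_of_nonneg hh, mul_comm]
      gcongr
      exact abs_le.mpr ⟨hu.1.le, hu.2⟩
    rw [Real.norm_eq_abs, abs_mul]
    calc |φ u| * |f (t - h * u) - f t| ≤ 1 * (L * (a * h)) := by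
          gcongr
          exacts [hφ_abs u, hL.abs_sub_le_of_abs_sub_le hhu]
      _ = L * (a * h) := one_mul _
  calc |∫ u in (-a)..a, φ u * (f (t - h * u) - f t)| ≤ L * (a * h) * |a - -a| :=
        intervalIntegral.norm_integral_le_of_norm_le_const hbound
    _ = 2 * L * a ^ 2 * h := by rw [sub_neg_eq_add, abs_of_nonneg (by linarith)]; ring

theorem abs_integral_comp_sub_div_mul_sub_le {L : NNReal} (ha : 0 ≤ a) (hh : 0 < h)
    (hφ : Continuous φ) (hφ_abs : ∀ u, |φ u| ≤ 1) (hφ0 : ∀ u ≤ -a, φ u = 0)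
    (hφ1 : ∀ u, a ≤ u → φ u = 1) (hf : Integrable f) (hfc : Continuous f)
    (hL : LipschitzOnWith L f (Icc (t - a * h) (t + a * h))) :
    |(∫ x, φ ((t - x) / h) * f x) - ((∫ x in Iic t, f x) - h * f t * (a - ∫ u in (-a)..a, φ u))|
      ≤ 3 * L * a ^ 2 * h ^ 2 := by
  have hpart := intervalIntegral.integral_Iic_sub_Iic (a := t - a * h) (b := t)
    hf.integrableOn hf.integrableOn
  have hcenter : ∫ u in (-a)..a, φ u * f (t - h * u)
      = (∫ u in (-a)..a, φ u * (f (t - h * u) - f t)) + f t * ∫ u in (-a)..a, φ u := by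
    rw [← intervalIntegral.integral_const_mul, ← intervalIntegral.integral_add
      ((by fun_prop : Continuous _).intervalIntegrable _ _)
      ((by fun_prop : Continuous _).intervalIntegrable _ _)]
    congr with u
    ring
  have hleft := abs_integral_sub_mul_le (mul_nonneg ha hh.le) hfc hL
  have hcentral := abs_integral_mul_sub_le ha hh.le hφ_abs hL
  rw [integral_comp_sub_div_mul_eq_integral_Iic_add hh hφ hφ_abs hφ0 hφ1 hf, hcenter]
  calc _ = |h * (∫ u in (-a)..a, φ u * (f (t - h * u) - f t))
          - ((∫ x in (t - a * h)..t, f x) - a * h * f t)| := by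
        rw [← hpart]; congr 1; ring
    _ ≤ h * (2 * L * a ^ 2 * h) + L * (a * h) ^ 2 := by
        refine (abs_sub _ _).trans (add_le_add ?_ hleft)
        rw [abs_mul, abs_of_pos hh]
        gcongr
    _ = 3 * L * a ^ 2 * h ^ 2 := by ring

end Smoothing

theorem stmt_14_general (a : ℝ) (ha : 0 < a) (k : ℝ → ℝ)
    (hk0 : ∀ x, 0 ≤ k x)
    (hsupp : ∀ x, x ∉ Set.Icc (-a) a → k x = 0)
    (hsymm : ∀ x, k (-x) = k x)
    (hkInt : Integrable k volume)
    (hint1 : ∫ x in (-a)..a, k x = 1)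
    (K : ℝ → ℝ) (hK : ∀ s, K s = ∫ x in (-a)..s, k x)
    (F f : ℝ → ℝ)
    (hF : ContDiff ℝ 2 F) (hf : f = deriv F)
    (hFbot : Filter.Tendsto F Filter.atBot (nhds 0))
    (hfint : Integrable f volume)
    (g : ℝ → ℝ) (hg : ∀ u, g u = K u - 1 / 2)
    (t : ℝ) :
    ∃ C > (0 : ℝ), ∃ δ > (0 : ℝ), ∀ h : ℝ, 0 < h → h < δ →
      |(∫ x, (K ((t - x) / h)) ^ 2 * f x)
        - (F t - h * f t * (a / 2 - ∫ u in (-a)..a, (g u) ^ 2))|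
      ≤ C * h ^ 2 := by
  have hKc : Continuous K := by
    rw [funext hK]
    exact intervalIntegral.continuous_primitive (fun _ _ ↦ hkInt.intervalIntegrable) _
  have hK01 : ∀ s, K s ∈ Icc 0 1 := fun s ↦ hK s ▸ primitive_mem_Icc hkInt hk0 hsupp hint1 s
  have hgodd : ∀ u, g (-u) = -g u := fun u ↦ by
    rw [hg, hg, hK, hK, primitive_neg hkInt hsymm hint1]
    ring
  have hK2 : ∫ u in (-a)..a, K u ^ 2 = a / 2 + ∫ u in (-a)..a, g u ^ 2 := by
    rw [← integral_add_half_sq_of_odd (by rw [funext hg]; fun_prop) hgodd]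
    congr with u
    rw [hg]
    ring
  have hf1 : ContDiff ℝ 1 f := hf ▸ hF.deriv'
  have hFt : ∫ x in Iic t, f x = F t := by
    simpa using integral_Iic_of_hasDerivAt_of_tendsto'
      (fun x _ ↦ hf ▸ (hF.differentiable two_ne_zero x).hasDerivAt) hfint.integrableOn hFbot
  obtain ⟨L, hL⟩ := hf1.contDiffOn.exists_lipschitzOnWith one_ne_zero
    (convex_Icc (t - a) (t + a)) isCompact_Icc
  refine ⟨3 * L * a ^ 2 + 1, by positivity, 1, one_pos, fun h hh0 hh1 ↦ ?_⟩
  have hexp := abs_integral_comp_sub_div_mul_sub_le (φ := fun u ↦ K u ^ 2) (t := t) ha.le hh0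
    (by fun_prop) (fun u ↦ abs_le.mpr ⟨by nlinarith [hK01 u], pow_le_one₀ (hK01 u).1 (hK01 u).2⟩)
    (fun u hu ↦ by simp [hK, primitive_eq_zero_of_le_neg hsupp hu])
    (fun u hu ↦ by simp [hK, primitive_eq_one_of_le hkInt hsupp hint1 hu]) hfint hf1.continuous
    (hL.mono (Icc_subset_Icc (by nlinarith) (by nlinarith)))
  rw [hFt, hK2, show ∀ G, a - (a / 2 + G) = a / 2 - G from fun G ↦ by ring] at hexp
  exact hexp.trans (by nlinarith [sq_nonneg h])

/-- Second-moment expansion: `∫ K((t-x)/h)² f(x) dx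
= F(t) - h f(t) (a/2 - ∫ g(u)² du) + O(h²)` as `h → 0`, where `g = K - 1/2`. -/
theorem stmt_14 (a : ℝ) (ha : 0 < a) (k : ℝ → ℝ)
    (hk0 : ∀ x, 0 ≤ k x)
    (hsupp : ∀ x, x ∉ Set.Icc (-a) a → k x = 0)
    (hsymm : ∀ x, k (-x) = k x)
    (hkInt : Integrable k volume)
    (hint1 : ∫ x in (-a)..a, k x = 1)
    (hint0 : (∫ x in (-a)..a, x * k x) = 0)
    (hint2 : (∫ x in (-a)..a, x ^ 2 * k x) ≠ 0)
    (K : ℝ → ℝ) (hK : ∀ s, K s = ∫ x in (-a)..s, k x)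
    (F f : ℝ → ℝ)
    (hF : ContDiff ℝ 2 F) (hf : f = deriv F)
    (hFmono : Monotone F)
    (hFbot : Filter.Tendsto F Filter.atBot (nhds 0))
    (hFtop : Filter.Tendsto F Filter.atTop (nhds 1))
    (hfint : Integrable f volume)
    (g : ℝ → ℝ) (hg : ∀ u, g u = K u - 1 / 2)
    (t : ℝ) :
    ∃ C > (0 : ℝ), ∃ δ > (0 : ℝ), ∀ h : ℝ, 0 < h → h < δ →
      |(∫ x, (K ((t - x) / h)) ^ 2 * f x)
        - (F t - h * f t * (a / 2 - ∫ u in (-a)..a, (g u) ^ 2))|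
      ≤ C * h ^ 2 :=
  stmt_14_general a ha k hk0 hsupp hsymm hkInt hint1 K hK F f hF hf hFbot hfint g hg t
end

section
/- Let $F$ be a twice continuously differentiable CDF with density $f$, $k$ a symmetric probability density on $[-a,a]$ with CDF $K$, and $h > 0$. Then $\mathrm{Var}\left(K\left(\frac{t-X}{h}\right)\right) = F(t)[1-F(t)] - h f(t)\left(a - \int_{-a}^{a} K(u)^2\, du\right) + O(h^2)$ as $h \to 0$, where $X$ has CDF $F$. -/
/-!
Substituting `x = t - h u`, for every bounded `G` that vanishes below `-a` and equals `1` above `a`,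
`𝔼 G((t - X)/h) = F(t - h a) + h ∫_{-a}^{a} G(u) f(t - h u) du`.
A first-order Taylor expansion of `F` at `t` and the Lipschitz continuity of `f` near `t` turn
this into `F(t) - h f(t) (a - ∫_{-a}^{a} G) + O(h²)`. For `G = K` the linear term vanishes, since the
symmetry of `k` gives `K(-u) = 1 - K(u)` and hence `∫_{-a}^{a} K = a`; for `G = K²` it is the
linear term of the claim. The expansion of `Var = 𝔼 K² - (𝔼 K)²` follows.
-/

open MeasureTheory Set Filter Topology NNReal

section KernelCDF

variable {a : ℝ} {k K : ℝ → ℝ}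

lemma kernelCDF_add (hkInt : Integrable k) (hK : ∀ s, K s = ∫ x in (-a)..s, k x) (u v : ℝ) :
    K v = K u + ∫ x in u..v, k x := by
  rw [hK, hK, intervalIntegral.integral_add_adjacent_intervals hkInt.intervalIntegrable
    hkInt.intervalIntegrable]

lemma kernelCDF_eq_zero (hsupp : ∀ x, x ∉ Icc (-a) a → k x = 0)
    (hK : ∀ s, K s = ∫ x in (-a)..s, k x) {u : ℝ} (hu : u ≤ -a) : K u = 0 := by
  rw [hK, intervalIntegral.integral_symm, intervalIntegral.integral_congr_Ioo_of_le (g := 0) hu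
    fun x hx => hsupp x fun hx' => hx.2.not_ge hx'.1]
  simp

lemma kernelCDF_eq_one (hsupp : ∀ x, x ∉ Icc (-a) a → k x = 0) (hkInt : Integrable k)
    (hint1 : ∫ x in (-a)..a, k x = 1) (hK : ∀ s, K s = ∫ x in (-a)..s, k x) {u : ℝ}
    (hu : a ≤ u) : K u = 1 := by
  rw [kernelCDF_add hkInt hK a u, intervalIntegral.integral_congr_Ioo_of_le (g := 0) hu
    fun x hx => hsupp x fun hx' => hx.1.not_ge hx'.2, hK, hint1]
  simp

lemma kernelCDF_monotone (hk0 : ∀ x, 0 ≤ k x) (hkInt : Integrable k)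
    (hK : ∀ s, K s = ∫ x in (-a)..s, k x) : Monotone K := fun u v huv => by
  rw [kernelCDF_add hkInt hK u v, le_add_iff_nonneg_right]
  exact intervalIntegral.integral_nonneg huv fun x _ => hk0 x

lemma kernelCDF_continuous (hkInt : Integrable k) (hK : ∀ s, K s = ∫ x in (-a)..s, k x) :
    Continuous K := by
  rw [funext hK]
  exact intervalIntegral.continuous_primitive (fun _ _ => hkInt.intervalIntegrable) (-a)

lemma abs_kernelCDF_le_one (hk0 : ∀ x, 0 ≤ k x) (hsupp : ∀ x, x ∉ Icc (-a) a → k x = 0)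
    (hkInt : Integrable k) (hint1 : ∫ x in (-a)..a, k x = 1)
    (hK : ∀ s, K s = ∫ x in (-a)..s, k x) (u : ℝ) : |K u| ≤ 1 := by
  have hmono := kernelCDF_monotone hk0 hkInt hK
  have hbot : K (min u (-a)) = 0 := kernelCDF_eq_zero hsupp hK (min_le_right _ _)
  have htop : K (max u a) = 1 := kernelCDF_eq_one hsupp hkInt hint1 hK (le_max_right _ _)
  rw [abs_le]
  constructor
  · linarith [hmono (min_le_left u (-a))]
  · linarith [hmono (le_max_left u a)]

lemma kernelCDF_neg (hsymm : ∀ x, k (-x) = k x) (hkInt : Integrable k)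
    (hint1 : ∫ x in (-a)..a, k x = 1) (hK : ∀ s, K s = ∫ x in (-a)..s, k x) (u : ℝ) :
    K (-u) = 1 - K u := by
  have hright : K (-u) = ∫ x in u..a, k x := by
    simpa [hsymm, ← hK] using (intervalIntegral.integral_comp_neg (a := u) (b := a) k).symm
  have hsplit := kernelCDF_add hkInt hK u a
  rw [hK a, hint1] at hsplit
  linarith

lemma integral_kernelCDF (hsymm : ∀ x, k (-x) = k x) (hkInt : Integrable k)
    (hint1 : ∫ x in (-a)..a, k x = 1) (hK : ∀ s, K s = ∫ x in (-a)..s, k x) :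
    ∫ u in (-a)..a, K u = a := by
  have hKii : IntervalIntegrable K volume (-a) a :=
    (kernelCDF_continuous hkInt hK).intervalIntegrable _ _
  have hreflect : ∫ u in (-a)..a, K u = ∫ u in (-a)..a, (1 - K u) := by
    simpa [kernelCDF_neg hsymm hkInt hint1 hK] using
      (intervalIntegral.integral_comp_neg (a := -a) (b := a) K).symm
  rw [intervalIntegral.integral_sub intervalIntegrable_const hKii] at hreflect
  simp only [intervalIntegral.integral_const, smul_eq_mul, mul_one, sub_neg_eq_add] at hreflect
  linarith

end KernelCDF

lemma integral_withDensity_ofReal {X E : Type*} [MeasurableSpace X] [NormedAddCommGroup E]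
    [NormedSpace ℝ E] {μ : Measure X} {f : X → ℝ} (hf : AEMeasurable f μ)
    (hf0 : ∀ᵐ x ∂μ, 0 ≤ f x) (g : X → E) :
    ∫ x, g x ∂μ.withDensity (fun x => ENNReal.ofReal (f x)) = ∫ x, f x • g x ∂μ := by
  rw [integral_withDensity_eq_integral_toReal_smul₀ hf.ennreal_ofReal
    (ae_of_all _ fun _ => ENNReal.ofReal_lt_top)]
  refine integral_congr_ae ?_
  filter_upwards [hf0] with x hx
  rw [ENNReal.toReal_ofReal hx]

lemma integral_mul_comp_sub_div (f G : ℝ → ℝ) (t : ℝ) {h : ℝ} (hh : 0 < h) :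
    ∫ x, f x * G ((t - x) / h) = h * ∫ u, G u * f (t - h * u) := by
  have hsub : ∀ x, f x * G ((t - x) / h) = G ((t - x) / h) * f (t - h * ((t - x) / h)) :=
    fun x => by rw [mul_div_cancel₀ _ hh.ne', sub_sub_cancel, mul_comm]
  simp_rw [hsub]
  rw [integral_sub_left_eq_self (fun y => G (y / h) * f (t - h * (y / h))) volume t,
    Measure.integral_comp_div (fun u => G u * f (t - h * u)) h, abs_of_pos hh, smul_eq_mul]

lemma integral_Ioi_comp_sub_mul {F f : ℝ → ℝ} (hFd : ∀ x, HasDerivAt F (f x) x)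
    (hfint : Integrable f) (hFbot : Tendsto F atBot (𝓝 0)) (a t : ℝ) {h : ℝ} (hh : 0 < h) :
    ∫ u in Ioi a, f (t - h * u) = F (t - h * a) / h := by
  have hderiv : ∀ u ∈ Ici a, HasDerivAt (fun u => -F (t - h * u) / h) (f (t - h * u)) u := by
    intro u _
    have hinner : HasDerivAt (fun u : ℝ => t - h * u) (-h) u := by
      simpa using ((hasDerivAt_id u).const_mul h).const_sub t
    refine (((hFd (t - h * u)).comp u hinner).neg.div_const h).congr_deriv ?_
    field_simp
  have hlim : Tendsto (fun u => -F (t - h * u) / h) atTop (𝓝 0) := by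
    have hinner : Tendsto (fun u : ℝ => t - h * u) atTop atBot :=
      tendsto_atBot_add_const_left _ t
        (tendsto_neg_atBot_iff.2 (tendsto_id.const_mul_atTop hh))
    simpa using ((hFbot.comp hinner).neg).div_const h
  have hfint' : Integrable fun u => f (t - h * u) :=
    (integrable_comp_mul_left_iff (fun v => f (t - v)) hh.ne').2 (hfint.comp_sub_left t)
  rw [integral_Ioi_of_hasDerivAt_of_tendsto' hderiv hfint'.integrableOn hlim]
  ring

lemma integrable_mul_comp_sub_mul {f G : ℝ → ℝ} (hfint : Integrable f)
    (hGm : AEStronglyMeasurable G) {C : ℝ} (hG : ∀ u, |G u| ≤ C) (t : ℝ) {h : ℝ} (hh : h ≠ 0) :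
    Integrable fun u => G u * f (t - h * u) :=
  ((integrable_comp_mul_left_iff (fun v => f (t - v)) hh).2
    (hfint.comp_sub_left t)).bdd_mul hGm (ae_of_all _ hG)

lemma integral_withDensity_comp_sub_div {F f G : ℝ → ℝ} (hFd : ∀ x, HasDerivAt F (f x) x)
    (hf0 : ∀ x, 0 ≤ f x) (hfint : Integrable f) (hFbot : Tendsto F atBot (𝓝 0))
    (hGm : AEStronglyMeasurable G) (hG : ∀ u, |G u| ≤ 1) {a : ℝ} (ha : 0 ≤ a)
    (hGlow : ∀ u ≤ -a, G u = 0) (hGhigh : ∀ u, a < u → G u = 1) (t : ℝ) {h : ℝ} (hh : 0 < h) :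
    ∫ x, G ((t - x) / h) ∂volume.withDensity (fun x => ENNReal.ofReal (f x))
      = F (t - h * a) + h * ∫ u in Ioc (-a) a, G u * f (t - h * u) := by
  have hint := integrable_mul_comp_sub_mul hfint hGm hG t hh.ne'
  have hsplit : ∫ u, G u * f (t - h * u)
      = (∫ u in Ioc (-a) a, G u * f (t - h * u)) + ∫ u in Ioi a, f (t - h * u) := by
    rw [← integral_add_compl measurableSet_Iic hint, compl_Iic,
      ← Ioc_union_Ioi_eq_Ioi (by linarith : -a ≤ a),
      setIntegral_union Ioc_disjoint_Ioi_same measurableSet_Ioi hint.integrableOn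
        hint.integrableOn,
      setIntegral_eq_zero_of_forall_eq_zero fun u hu => by simp [hGlow u hu],
      setIntegral_congr_fun (g := fun u => f (t - h * u)) measurableSet_Ioi
        fun u hu => by simp [hGhigh u hu], zero_add]
  rw [integral_withDensity_ofReal hfint.aemeasurable (ae_of_all _ hf0)]
  simp only [smul_eq_mul]
  rw [integral_mul_comp_sub_div f G t hh, hsplit, integral_Ioi_comp_sub_mul hFd hfint hFbot a t hh,
    mul_add, mul_div_cancel₀ _ hh.ne', add_comm]

lemma abs_sub_sub_mul_le_of_lipschitzOnWith {F f : ℝ → ℝ} {s : Set ℝ} {L : ℝ≥0}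
    (hs : Convex ℝ s) (hFd : ∀ x ∈ s, HasDerivAt F (f x) x) (hf : LipschitzOnWith L f s)
    {t x : ℝ} (ht : t ∈ s) (hx : x ∈ s) :
    |F x - F t - f t * (x - t)| ≤ L * (x - t) ^ 2 := by
  have hsub : uIcc t x ⊆ s := hs.ordConnected.uIcc_subset ht hx
  have hderiv : ∀ y ∈ uIcc t x,
      HasDerivWithinAt (fun y => F y - f t * y) (f y - f t) (uIcc t x) y := fun y hy =>
    ((hFd y (hsub hy)).sub ((hasDerivAt_id y).const_mul (f t))).hasDerivWithinAt.congr_deriv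
      (by simp)
  have hbound : ∀ y ∈ uIcc t x, ‖f y - f t‖ ≤ L * |x - t| := fun y hy =>
    calc ‖f y - f t‖ ≤ L * |y - t| := hf.dist_le_mul y (hsub hy) t ht
      _ ≤ L * |x - t| := mul_le_mul_of_nonneg_left (abs_sub_left_of_mem_uIcc hy) L.2
  have hmvt := (convex_uIcc t x).norm_image_sub_le_of_norm_hasDerivWithin_le hderiv hbound
    left_mem_uIcc right_mem_uIcc
  rw [Real.norm_eq_abs, Real.norm_eq_abs, mul_assoc, abs_mul_abs_self] at hmvt
  convert hmvt using 2 <;> ring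

lemma abs_setIntegral_mul_comp_sub_sub_le {f G : ℝ → ℝ} {L : ℝ≥0} {a t h : ℝ} (ha : 0 ≤ a)
    (hh : 0 ≤ h) (hf : LipschitzOnWith L f (Icc (t - h * a) (t + h * a)))
    (hG : ∀ u, |G u| ≤ 1) (hint : IntegrableOn (fun u => G u * f (t - h * u)) (Ioc (-a) a))
    (hGint : IntegrableOn G (Ioc (-a) a)) :
    |(∫ u in Ioc (-a) a, G u * f (t - h * u)) - f t * ∫ u in Ioc (-a) a, G u|
      ≤ L * (h * a) * (2 * a) := by
  rw [← integral_const_mul, ← integral_sub hint (hGint.const_mul _), ← Real.norm_eq_abs]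
  refine (norm_setIntegral_le_of_norm_le_const (C := L * (h * a)) measure_Ioc_lt_top
    fun u hu => ?_).trans_eq
    (by rw [Real.volume_real_Ioc_of_le (by linarith)]; ring)
  have hu' : |u| ≤ a := abs_le.2 ⟨hu.1.le, hu.2⟩
  have hmem : ∀ {v}, |v| ≤ a → t - h * v ∈ Icc (t - h * a) (t + h * a) := fun hv => by
    obtain ⟨hlo, hhi⟩ := abs_le.1 hv
    constructor <;> nlinarith [mul_le_mul_of_nonneg_left hlo hh, mul_le_mul_of_nonneg_left hhi hh]
  have ht : t ∈ Icc (t - h * a) (t + h * a) := by simpa using hmem (v := 0) (by simpa using ha)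
  calc ‖G u * f (t - h * u) - f t * G u‖ = |G u| * |f (t - h * u) - f t| := by
        rw [Real.norm_eq_abs, ← abs_mul]; ring_nf
    _ ≤ 1 * (L * |t - h * u - t|) := by
        gcongr
        · exact hG u
        · exact hf.dist_le_mul _ (hmem hu') _ ht
    _ ≤ L * (h * a) := by
        rw [one_mul, sub_sub_cancel_left, abs_neg, abs_mul, abs_of_nonneg hh]
        gcongr

lemma abs_integral_withDensity_comp_sub_div_sub_le {F f G : ℝ → ℝ}
    (hFd : ∀ x, HasDerivAt F (f x) x) (hf0 : ∀ x, 0 ≤ f x) (hfint : Integrable f)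
    (hFbot : Tendsto F atBot (𝓝 0)) (hGm : AEStronglyMeasurable G) (hG : ∀ u, |G u| ≤ 1)
    {a : ℝ} (ha : 0 ≤ a) (hGlow : ∀ u ≤ -a, G u = 0) (hGhigh : ∀ u, a < u → G u = 1)
    {t h : ℝ} (hh : 0 < h) {L : ℝ≥0} (hf : LipschitzOnWith L f (Icc (t - h * a) (t + h * a))) :
    |∫ x, G ((t - x) / h) ∂volume.withDensity (fun x => ENNReal.ofReal (f x))
      - (F t - h * f t * (a - ∫ u in (-a)..a, G u))| ≤ 3 * L * a ^ 2 * h ^ 2 := by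
  have hint := integrable_mul_comp_sub_mul hfint hGm hG t hh.ne'
  have hGint : IntegrableOn G (Ioc (-a) a) :=
    .of_bound measure_Ioc_lt_top hGm.restrict 1 (ae_of_all _ hG)
  have htaylor := abs_sub_sub_mul_le_of_lipschitzOnWith (convex_Icc _ _) (fun x _ => hFd x) hf
    (x := t - h * a) (t := t) ⟨by nlinarith, by nlinarith⟩ ⟨by nlinarith, by nlinarith⟩
  have hmean := abs_setIntegral_mul_comp_sub_sub_le ha hh.le hf hG hint.integrableOn hGint
  rw [integral_withDensity_comp_sub_div hFd hf0 hfint hFbot hGm hG ha hGlow hGhigh t hh,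
    intervalIntegral.integral_of_le (by linarith)]
  calc _ = |(F (t - h * a) - F t - f t * (t - h * a - t))
          + h * ((∫ u in Ioc (-a) a, G u * f (t - h * u)) - f t * ∫ u in Ioc (-a) a, G u)| := by
        ring_nf
    _ ≤ L * (t - h * a - t) ^ 2 + h * (L * (h * a) * (2 * a)) := by
        refine (abs_add_le _ _).trans (add_le_add htaylor ?_)
        rw [abs_mul, abs_of_pos hh]
        gcongr
    _ = 3 * L * a ^ 2 * h ^ 2 := by ring

lemma abs_sub_sq_sub_le {m₁ m₂ p r ε₁ ε₂ : ℝ} (h₁ : |m₁ - p| ≤ ε₁) (h₂ : |m₂ - (p - r)| ≤ ε₂) :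
    |m₂ - m₁ ^ 2 - (p * (1 - p) - r)| ≤ ε₂ + ε₁ * (ε₁ + 2 * |p|) := by
  have hε₁ : 0 ≤ ε₁ := (abs_nonneg _).trans h₁
  calc |m₂ - m₁ ^ 2 - (p * (1 - p) - r)|
        = |(m₂ - (p - r)) - (m₁ - p) * ((m₁ - p) + 2 * p)| := by ring_nf
    _ ≤ |m₂ - (p - r)| + |m₁ - p| * (|m₁ - p| + 2 * |p|) := by
        refine (abs_sub _ _).trans ?_
        rw [abs_mul]
        gcongr
        exact (abs_add_le _ _).trans_eq (by rw [abs_mul, abs_two])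
    _ ≤ ε₂ + ε₁ * (ε₁ + 2 * |p|) := by gcongr

theorem stmt_15_general (a : ℝ) (ha : 0 < a) (k : ℝ → ℝ)
    (hk0 : ∀ x, 0 ≤ k x)
    (hsupp : ∀ x, x ∉ Set.Icc (-a) a → k x = 0)
    (hsymm : ∀ x, k (-x) = k x)
    (hkInt : Integrable k volume)
    (hint1 : ∫ x in (-a)..a, k x = 1)
    (K : ℝ → ℝ) (hK : ∀ s, K s = ∫ x in (-a)..s, k x)
    (F f : ℝ → ℝ)
    (hF : ContDiff ℝ 2 F) (hf : f = deriv F)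
    (hFmono : Monotone F)
    (hFbot : Filter.Tendsto F Filter.atBot (nhds 0))
    (hfint : Integrable f volume)
    (μ : Measure ℝ)
    (hμ : μ = volume.withDensity (fun x => ENNReal.ofReal (f x)))
    (t : ℝ) :
    ∃ C > (0 : ℝ), ∃ δ > (0 : ℝ), ∀ h : ℝ, 0 < h → h < δ →
      |((∫ x, (K ((t - x) / h)) ^ 2 ∂μ) - (∫ x, K ((t - x) / h) ∂μ) ^ 2)
        - (F t * (1 - F t) - h * f t * (a - ∫ u in (-a)..a, (K u) ^ 2))|
      ≤ C * h ^ 2 := by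
  subst hf hμ
  have hFd : ∀ x, HasDerivAt F (deriv F x) x :=
    fun x => (hF.differentiable (by norm_num) x).hasDerivAt
  obtain ⟨L, hL⟩ : ∃ L, LipschitzOnWith L (deriv F) (Icc (t - a) (t + a)) :=
    (hF.deriv' (n := 1)).locallyLipschitz.locallyLipschitzOn.exists_lipschitzOnWith_of_compact
      isCompact_Icc
  have hKm : AEStronglyMeasurable K := (kernelCDF_continuous hkInt hK).aestronglyMeasurable
  have hKbd := abs_kernelCDF_le_one hk0 hsupp hkInt hint1 hK
  have hKlow : ∀ u ≤ -a, K u = 0 := fun u hu => kernelCDF_eq_zero hsupp hK hu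
  have hKhigh : ∀ u, a < u → K u = 1 := fun u hu => kernelCDF_eq_one hsupp hkInt hint1 hK hu.le
  set c : ℝ := 3 * L * a ^ 2
  refine ⟨c + c * (c + 2 * |F t|) + 1, by positivity, 1, one_pos, fun h hh h1 => ?_⟩
  have hLh : LipschitzOnWith L (deriv F) (Icc (t - h * a) (t + h * a)) :=
    hL.mono (Icc_subset_Icc (by nlinarith) (by nlinarith))
  have hmean := abs_integral_withDensity_comp_sub_div_sub_le hFd (fun _ => hFmono.deriv_nonneg)
    hfint hFbot hKm hKbd ha.le hKlow hKhigh hh hLh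
  rw [integral_kernelCDF hsymm hkInt hint1 hK, sub_self, mul_zero, sub_zero] at hmean
  have hsecond := abs_integral_withDensity_comp_sub_div_sub_le (G := fun u => K u ^ 2) hFd
    (fun _ => hFmono.deriv_nonneg) hfint hFbot (hKm.pow 2)
    (fun u => by rw [abs_pow]; exact pow_le_one₀ (abs_nonneg _) (hKbd u)) ha.le
    (fun u hu => by simp [hKlow u hu]) (fun u hu => by simp [hKhigh u hu]) hh hLh
  have hc : 0 ≤ c := by positivity
  have hh2 : h ^ 2 ≤ 1 := pow_le_one₀ hh.le h1.le
  calc _ ≤ c * h ^ 2 + c * h ^ 2 * (c * h ^ 2 + 2 * |F t|) := abs_sub_sq_sub_le hmean hsecond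
    _ ≤ c * h ^ 2 + c * h ^ 2 * (c + 2 * |F t|) := by
        gcongr
        exact mul_le_of_le_one_right hc hh2
    _ = (c + c * (c + 2 * |F t|)) * h ^ 2 := by ring
    _ ≤ _ := mul_le_mul_of_nonneg_right (le_add_of_nonneg_right zero_le_one) (sq_nonneg h)

/-- Variance expansion: for `X` with density `f` and CDF `F`,
`Var (K((t-X)/h)) = F(t)(1-F(t)) - h f(t) (a - ∫ K(u)² du) + O(h²)` as `h → 0`. -/
theorem stmt_15 (a : ℝ) (ha : 0 < a) (k : ℝ → ℝ)
    (hk0 : ∀ x, 0 ≤ k x)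
    (hsupp : ∀ x, x ∉ Set.Icc (-a) a → k x = 0)
    (hsymm : ∀ x, k (-x) = k x)
    (hkInt : Integrable k volume)
    (hint1 : ∫ x in (-a)..a, k x = 1)
    (hint0 : (∫ x in (-a)..a, x * k x) = 0)
    (hint2 : (∫ x in (-a)..a, x ^ 2 * k x) ≠ 0)
    (K : ℝ → ℝ) (hK : ∀ s, K s = ∫ x in (-a)..s, k x)
    (F f : ℝ → ℝ)
    (hF : ContDiff ℝ 2 F) (hf : f = deriv F)
    (hFmono : Monotone F)
    (hFbot : Filter.Tendsto F Filter.atBot (nhds 0))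
    (hFtop : Filter.Tendsto F Filter.atTop (nhds 1))
    (hfint : Integrable f volume)
    (μ : Measure ℝ)
    (hμ : μ = volume.withDensity (fun x => ENNReal.ofReal (f x)))
    (t : ℝ) :
    ∃ C > (0 : ℝ), ∃ δ > (0 : ℝ), ∀ h : ℝ, 0 < h → h < δ →
      |((∫ x, (K ((t - x) / h)) ^ 2 ∂μ) - (∫ x, K ((t - x) / h) ∂μ) ^ 2)
        - (F t * (1 - F t) - h * f t * (a - ∫ u in (-a)..a, (K u) ^ 2))|
      ≤ C * h ^ 2 :=
  stmt_15_general a ha k hk0 hsupp hsymm hkInt hint1 K hK F f hF hf hFmono hFbot hfint μ hμ t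
end
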